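/- arXiv:1206.5187 — 3 statements merged into one kernel-verified Lean document; each statement's English description precedes it below -/
import Mathlib

section
/- Let $\mu \geq 0$ and let $\lambda$ be a complex number with $\mathrm{Im}(\lambda) < 0$. Define $g(\lambda) := i\lambda + (\mu^2 - \lambda^2)^{1/2}$ (principal square root). Then $|g(\lambda)| > \mu$. -/
/-!
Write `w` for the principal square root of `μ² - λ²`, so that `Re w > 0`, and put
`g = iλ + w`, `h = w - iλ`. Then `g h = w² + λ² = μ²`, while
`|g|² - |h|² = 4 (-Re w · Im λ + Im w · Re λ)`. The first summand is positive since
`Im λ < 0`, and the second is nonnegative because `Im (w²) = Im (-λ²)` gives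
`Re w · Im w = -Re λ · Im λ`. Hence `|h| < |g|`, so `μ² = |g| |h| < |g|²`.
-/

open Complex

lemma Complex.re_cpow_half_pos {z : ℂ} (hz : z ∈ slitPlane) : 0 < (z ^ (1 / 2 : ℂ)).re := by
  rw [one_div, cpow_inv_two_re, Real.sqrt_pos]
  rcases mem_slitPlane_iff.mp hz with hre | him
  · positivity
  · linarith [neg_abs_le z.re, abs_re_lt_norm.mpr him]

lemma Complex.ofReal_sq_sub_sq_mem_slitPlane (μ : ℝ) {l : ℂ} (hl : l.im ≠ 0) :
    (μ : ℂ) ^ 2 - l ^ 2 ∈ slitPlane := by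
  rw [mem_slitPlane_iff]
  by_cases hre : l.re = 0
  · left
    have hl2 : 0 < l.im ^ 2 := by positivity
    simp only [sub_re, ← ofReal_pow, ofReal_re, sq l, mul_re, hre]
    nlinarith [sq_nonneg μ]
  · right
    simp only [sub_im, ← ofReal_pow, ofReal_im, sq l, mul_im]
    intro h
    have : l.re * l.im = 0 := by linarith
    exact mul_ne_zero hre hl this

lemma Complex.norm_sub_I_mul_lt_norm_I_mul_add {w l : ℂ} (hw : 0 < w.re) (hl : l.im < 0)
    (hreal : (w ^ 2 + l ^ 2).im = 0) : ‖w - I * l‖ < ‖I * l + w‖ := by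
  have hprod : w.re * w.im = -(l.re * l.im) := by
    simp only [add_im, sq, mul_im] at hreal
    linarith
  have hcross : 0 ≤ w.im * l.re := by
    refine nonneg_of_mul_nonneg_right ?_ hw
    calc 0 ≤ l.re ^ 2 * -l.im := mul_nonneg (sq_nonneg _) (by linarith)
      _ = w.re * (w.im * l.re) := by linear_combination (-l.re) * hprod
  have hdiff : ‖I * l + w‖ ^ 2 - ‖w - I * l‖ ^ 2 = 4 * (w.re * -l.im + w.im * l.re) := by
    simp only [← normSq_eq_norm_sq, normSq_apply, add_re, add_im, sub_re, sub_im, mul_re,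
      mul_im, I_re, I_im]
    ring
  refine lt_of_pow_lt_pow_left₀ 2 (norm_nonneg _) ?_
  nlinarith [mul_pos hw (neg_pos.mpr hl)]

lemma lt_of_mul_eq_sq {a b μ : ℝ} (hb : 0 ≤ b) (hba : b < a) (h : a * b = μ ^ 2) : μ < a := by
  have : μ ^ 2 < a ^ 2 := by nlinarith
  exact (le_abs_self μ).trans_lt (abs_lt_of_sq_lt_sq this (hb.trans hba.le))

theorem stmt6_general (μ : ℝ) (l : ℂ) (hl : l.im < 0) :
    μ < ‖Complex.I * l + ((μ:ℂ)^2 - l^2) ^ ((1:ℂ)/2)‖ := by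
  set w := ((μ : ℂ) ^ 2 - l ^ 2) ^ ((1 : ℂ) / 2)
  have hw_sq : w ^ 2 = (μ : ℂ) ^ 2 - l ^ 2 := by simp [w]
  have hw_re : 0 < w.re := re_cpow_half_pos (ofReal_sq_sub_sq_mem_slitPlane μ hl.ne)
  have hfactor : (I * l + w) * (w - I * l) = ((μ ^ 2 : ℝ) : ℂ) := by
    push_cast
    linear_combination hw_sq - l ^ 2 * I_sq
  have hreal : (w ^ 2 + l ^ 2).im = 0 := by
    rw [hw_sq, sub_add_cancel, ← ofReal_pow, ofReal_im]
  refine lt_of_mul_eq_sq (norm_nonneg _) (norm_sub_I_mul_lt_norm_I_mul_add hw_re hl hreal) ?_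
  rw [← norm_mul, hfactor, norm_real, Real.norm_of_nonneg (sq_nonneg μ)]

theorem stmt6 (μ : ℝ) (hμ : 0 ≤ μ) (l : ℂ) (hl : l.im < 0) :
    μ < ‖Complex.I * l + ((μ:ℂ)^2 - l^2) ^ ((1:ℂ)/2)‖ :=
  stmt6_general μ l hl
end

section
/- Let $\mu \geq 0$ and let $z$ be a complex number with $\mathrm{Re}(z) > 0$ and $|z| > \mu$. Define $g(\lambda) := i\lambda + (\mu^2 - \lambda^2)^{1/2}$ (principal square root) and $h(z) := -\frac{i}{2z}(z^2 - \mu^2)$. Then $g(h(z)) = z$. -/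
/-!
Put `w = (z + μ² / z) / 2`. Then `μ² - h(z)² = w²`, and `Re w > 0` because `Re (μ² / z) = μ² Re z / |z|²`.
So `w` is the principal square root of `μ² - h(z)²`, and `i h(z) + w = (z - μ² / z) / 2 + (z + μ² / z) / 2 = z`.
-/

namespace Complex

lemma re_add_ofReal_div_pos {z : ℂ} (hz : 0 < z.re) {c : ℝ} (hc : 0 ≤ c) :
    0 < (z + c / z).re := by
  have hcz : 0 ≤ (c / z).re := by
    rw [div_re, ofReal_re, ofReal_im, zero_mul, zero_div, add_zero]
    exact div_nonneg (mul_nonneg hc hz.le) (normSq_nonneg z)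
  rw [add_re]
  linarith

lemma sub_sq_eq_half_add_div_sq {c z : ℂ} (hz : z ≠ 0) :
    c - (-(I / (2 * z)) * (z ^ 2 - c)) ^ 2 = ((z + c / z) / 2) ^ 2 := by
  field_simp
  linear_combination (-(z ^ 2 - c) ^ 2) * I_sq

lemma sq_cpow_one_half {w : ℂ} (hw : 0 < w.re) : (w ^ 2) ^ ((1 : ℂ) / 2) = w := by
  simpa [one_div] using sq_cpow_two_inv hw

end Complex

theorem stmt8_general (μ : ℝ) (z : ℂ) (hz : 0 < z.re) :
    Complex.I * (-(Complex.I / (2*z)) * (z^2 - (μ:ℂ)^2)) +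
      ((μ:ℂ)^2 - (-(Complex.I / (2*z)) * (z^2 - (μ:ℂ)^2))^2) ^ ((1:ℂ)/2) = z := by
  have hz0 : z ≠ 0 := fun h => by simp [h] at hz
  have hw : 0 < ((z + (μ:ℂ) ^ 2 / z) / 2).re := by
    rw [Complex.div_ofNat_re]
    exact half_pos (mod_cast Complex.re_add_ofReal_div_pos hz (sq_nonneg μ))
  rw [Complex.sub_sq_eq_half_add_div_sq hz0, Complex.sq_cpow_one_half hw]
  field_simp
  linear_combination (-(z ^ 2) + (μ:ℂ) ^ 2) * Complex.I_sq

theorem stmt8 (μ : ℝ) (hμ : 0 ≤ μ) (z : ℂ) (hz : 0 < z.re) (hzμ : μ < ‖z‖) :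
    Complex.I * (-(Complex.I / (2*z)) * (z^2 - (μ:ℂ)^2)) +
      ((μ:ℂ)^2 - (-(Complex.I / (2*z)) * (z^2 - (μ:ℂ)^2))^2) ^ ((1:ℂ)/2) = z :=
  stmt8_general μ z hz
end

section
/- Let $\mu \geq 0$. The map $g(\lambda) = i\lambda + (\mu^2-\lambda^2)^{1/2}$ (principal square root) is a bijection from the open lower half-plane $\{\lambda \in \mathbb{C} : \mathrm{Im}(\lambda) < 0\}$ onto $\{z \in \mathbb{C} : \mathrm{Re}(z) > 0, |z| > \mu\}$, with inverse $g^{-1}(z) = -\frac{i}{2z}(z^2 - \mu^2)$. -/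
/-!
Write `z = g(λ) = iλ + w` with `w² = μ² - λ²`. Expanding `(z - iλ)² = μ² - λ²` shows that this is
the same as `z² - μ² = 2iλz`, i.e. `λ = -i(z² - μ²)/(2z)`. Taking real parts of
`z - μ² z̄ / |z|² = 2iλ` gives `-2 Im λ |z|² = Re z (|z|² - μ²)`, so for `Re z > 0` the conditions
`Im λ < 0` and `|z| > μ` are equivalent. Finally the principal square root is the unique square
root with nonnegative real part, which pins down `w = z - iλ` once its real part is positive.
-/

open Complex Set

namespace Complex

lemma cpow_one_div_two_sq (s : ℂ) : (s ^ ((1 : ℂ) / 2)) ^ 2 = s := by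
  simp [one_div]

lemma re_cpow_one_div_two_nonneg (s : ℂ) : 0 ≤ (s ^ ((1 : ℂ) / 2)).re := by
  rw [one_div, cpow_inv_two_re]
  exact Real.sqrt_nonneg _

lemma cpow_one_div_two_eq_of_sq_eq {w s : ℂ} (hw : w ^ 2 = s) (hre : 0 < w.re) :
    s ^ ((1 : ℂ) / 2) = w := by
  have hsum : s ^ ((1 : ℂ) / 2) + w ≠ 0 := fun h => by
    have := congrArg re h
    simp only [add_re, zero_re] at this
    linarith [re_cpow_one_div_two_nonneg s]
  have hprod : (s ^ ((1 : ℂ) / 2) - w) * (s ^ ((1 : ℂ) / 2) + w) = 0 := by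
    linear_combination cpow_one_div_two_sq s - hw
  exact sub_eq_zero.mp ((mul_eq_zero.mp hprod).resolve_right hsum)

end Complex

noncomputable section HalfPlaneMap

variable (μ : ℝ)

def halfPlaneMap (l : ℂ) : ℂ := I * l + ((μ : ℂ) ^ 2 - l ^ 2) ^ ((1 : ℂ) / 2)

def halfPlaneMapInv (z : ℂ) : ℂ := -(I / (2 * z)) * (z ^ 2 - (μ : ℂ) ^ 2)

variable {μ}

lemma sq_sub_I_mul_eq_iff {z l : ℂ} :
    (z - I * l) ^ 2 = (μ : ℂ) ^ 2 - l ^ 2 ↔ z ^ 2 - (μ : ℂ) ^ 2 = 2 * I * l * z := by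
  constructor <;> intro h
  · linear_combination h - l ^ 2 * I_sq
  · linear_combination h + l ^ 2 * I_sq

lemma im_mul_normSq_of_sq_sub_eq {z l : ℂ} (h : z ^ 2 - (μ : ℂ) ^ 2 = 2 * I * l * z) :
    2 * l.im * normSq z = z.re * (μ ^ 2 - normSq z) := by
  have hre := congrArg re h
  have him := congrArg im h
  simp only [pow_two, sub_re, sub_im, mul_re, mul_im, ofReal_re, ofReal_im, I_re, I_im,
    re_ofNat, im_ofNat] at hre him
  rw [normSq_apply]
  linear_combination z.re * hre + z.im * him

lemma halfPlaneMapInv_eq_iff {z l : ℂ} (hz : z ≠ 0) :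
    halfPlaneMapInv μ z = l ↔ z ^ 2 - (μ : ℂ) ^ 2 = 2 * I * l * z := by
  unfold halfPlaneMapInv
  constructor
  · rintro rfl
    field_simp
    linear_combination (z ^ 2 - (μ : ℂ) ^ 2) * I_sq
  · intro h
    rw [h]
    field_simp
    linear_combination -l * I_sq

lemma re_halfPlaneMap_pos {l : ℂ} (hl : l.im < 0) : 0 < (halfPlaneMap μ l).re := by
  have := re_cpow_one_div_two_nonneg ((μ : ℂ) ^ 2 - l ^ 2)
  simp only [halfPlaneMap, add_re, mul_re, I_re, I_im]
  linarith

lemma halfPlaneMap_sq_sub (l : ℂ) :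
    halfPlaneMap μ l ^ 2 - (μ : ℂ) ^ 2 = 2 * I * l * halfPlaneMap μ l := by
  rw [← sq_sub_I_mul_eq_iff, halfPlaneMap, add_sub_cancel_left]
  exact cpow_one_div_two_sq _

lemma sq_lt_normSq_of_sq_sub_eq {z l : ℂ} (hl : l.im < 0) (hz : 0 < z.re)
    (h : z ^ 2 - (μ : ℂ) ^ 2 = 2 * I * l * z) : μ ^ 2 < normSq z := by
  have hformula := im_mul_normSq_of_sq_sub_eq h
  have hN : 0 < normSq z := normSq_pos.mpr (ne_zero_of_re_pos hz)
  nlinarith [mul_neg_of_neg_of_pos hl hN]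

lemma im_neg_of_sq_sub_eq {z l : ℂ} (hz : 0 < z.re) (hμz : μ ^ 2 < normSq z)
    (h : z ^ 2 - (μ : ℂ) ^ 2 = 2 * I * l * z) : l.im < 0 := by
  have hformula := im_mul_normSq_of_sq_sub_eq h
  nlinarith

lemma re_sub_I_mul_pos_of_sq_sub_eq {z l : ℂ} (hz : 0 < z.re)
    (h : z ^ 2 - (μ : ℂ) ^ 2 = 2 * I * l * z) : 0 < (z - I * l).re := by
  have hformula := im_mul_normSq_of_sq_sub_eq h
  have hN : 0 < normSq z := normSq_pos.mpr (ne_zero_of_re_pos hz)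
  simp only [sub_re, mul_re, I_re, I_im]
  nlinarith [sq_nonneg μ]

lemma sq_lt_normSq_iff (hμ : 0 ≤ μ) {z : ℂ} : μ ^ 2 < normSq z ↔ μ < ‖z‖ := by
  rw [← Complex.sq_norm]
  exact sq_lt_sq₀ hμ (norm_nonneg z)

lemma mapsTo_halfPlaneMap (hμ : 0 ≤ μ) :
    MapsTo (halfPlaneMap μ) {l | l.im < 0} {z | 0 < z.re ∧ μ < ‖z‖} := fun l hl =>
  have hz := re_halfPlaneMap_pos hl
  ⟨hz, (sq_lt_normSq_iff hμ).mp (sq_lt_normSq_of_sq_sub_eq hl hz (halfPlaneMap_sq_sub l))⟩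

lemma halfPlaneMapInv_sq_sub {z : ℂ} (hz : z ≠ 0) :
    z ^ 2 - (μ : ℂ) ^ 2 = 2 * I * halfPlaneMapInv μ z * z :=
  (halfPlaneMapInv_eq_iff hz).mp rfl

lemma mapsTo_halfPlaneMapInv (hμ : 0 ≤ μ) :
    MapsTo (halfPlaneMapInv μ) {z | 0 < z.re ∧ μ < ‖z‖} {l | l.im < 0} :=
  fun _ ⟨hz, hμz⟩ => im_neg_of_sq_sub_eq hz ((sq_lt_normSq_iff hμ).mpr hμz)
    (halfPlaneMapInv_sq_sub (ne_zero_of_re_pos hz))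

lemma leftInvOn_halfPlaneMapInv :
    LeftInvOn (halfPlaneMapInv μ) (halfPlaneMap μ) {l | l.im < 0} := fun l hl =>
  (halfPlaneMapInv_eq_iff (ne_zero_of_re_pos (re_halfPlaneMap_pos hl))).mpr (halfPlaneMap_sq_sub l)

lemma rightInvOn_halfPlaneMapInv :
    RightInvOn (halfPlaneMapInv μ) (halfPlaneMap μ) {z | 0 < z.re ∧ μ < ‖z‖} := by
  rintro z ⟨hz, -⟩
  have h := halfPlaneMapInv_sq_sub (μ := μ) (ne_zero_of_re_pos hz)
  rw [halfPlaneMap, cpow_one_div_two_eq_of_sq_eq (sq_sub_I_mul_eq_iff.mpr h)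
    (re_sub_I_mul_pos_of_sq_sub_eq hz h)]
  ring

end HalfPlaneMap

theorem stmt10 (μ : ℝ) (hμ : 0 ≤ μ) :
    Set.BijOn (fun l : ℂ => Complex.I * l + ((μ:ℂ)^2 - l^2) ^ ((1:ℂ)/2))
      {l : ℂ | l.im < 0} {z : ℂ | 0 < z.re ∧ μ < ‖z‖} ∧
    (∀ l : ℂ, l.im < 0 →
      -(Complex.I / (2*(Complex.I * l + ((μ:ℂ)^2 - l^2) ^ ((1:ℂ)/2)))) *
        ((Complex.I * l + ((μ:ℂ)^2 - l^2) ^ ((1:ℂ)/2))^2 - (μ:ℂ)^2) = l) ∧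
    (∀ z : ℂ, 0 < z.re → μ < ‖z‖ →
      Complex.I * (-(Complex.I / (2*z)) * (z^2 - (μ:ℂ)^2)) +
        ((μ:ℂ)^2 - (-(Complex.I / (2*z)) * (z^2 - (μ:ℂ)^2))^2) ^ ((1:ℂ)/2) = z) := by
  exact ⟨InvOn.bijOn ⟨leftInvOn_halfPlaneMapInv, rightInvOn_halfPlaneMapInv⟩
      (mapsTo_halfPlaneMap hμ) (mapsTo_halfPlaneMapInv hμ),
    fun l hl => leftInvOn_halfPlaneMapInv hl,
    fun z hz hμz => rightInvOn_halfPlaneMapInv ⟨hz, hμz⟩⟩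
end
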